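/- arXiv:2305.02742 — 3 statements merged into one kernel-verified Lean document; each statement's English description precedes it below -/
import Mathlib

section
/- Let F₁ = H_{1,α₁} and F₂ = H_{1,α₂} with α₁ > α₂ > 0, and suppose n₂ = ⌈b^{α₂} n₁^{α₂/α₁}⌉ for a fixed b > 0. Then β_n = n₂^{1/α₂}/n₁^{1/α₁} → b as n₁ → ∞, and for every x > 1, F₁(x^{n₂^{1/α₂}})^{n₁} → H_{1,α₁}(x^b) = exp(-(b log x)^{-α₁}) as n₁ → ∞; hence the distribution function of the power-normalized maximum of maxima, F₁(x^{n₂^{1/α₂}})^{n₁} · F₂(x^{n₂^{1/α₂}})^{n₂}, converges pointwise for x > 1 to the accelerated p-max stable limit exp(-(b log x)^{-α₁} - (log x)^{-α₂}). -/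
open Real Filter Topology

/-- The log-Fréchet distribution function `H_{1,α}`. -/
noncomputable def H1 (α x : ℝ) : ℝ :=
  if x ≤ 1 then 0 else Real.exp (-(Real.log x) ^ (-α))

/-- Log-Fréchet & log-Fréchet with `α₁ > α₂ > 0` and `n₂ = ⌈b^{α₂} n₁^{α₂/α₁}⌉`:
then `β_n = n₂^{1/α₂}/n₁^{1/α₁} → b`; for every `x > 1` the first normalized
sub-maximum satisfies `F₁(x^{n₂^{1/α₂}})^{n₁} → exp(-(b log x)^{-α₁})`, and the
power-normalized maximum of maxima converges to the accelerated p-max stable limit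
`exp(-(b log x)^{-α₁} - (log x)^{-α₂})`. -/
theorem stmt_4 (α₁ α₂ b : ℝ) (h12 : α₂ < α₁) (h2 : 0 < α₂) (hb : 0 < b)
    (n₂ : ℕ → ℕ) (hn₂ : ∀ n : ℕ, n₂ n = ⌈b ^ α₂ * (n : ℝ) ^ (α₂ / α₁)⌉₊) :
    Tendsto (fun n : ℕ => ((n₂ n : ℝ) ^ (1 / α₂)) / ((n : ℝ) ^ (1 / α₁))) atTop (𝓝 b) ∧
    (∀ x : ℝ, 1 < x →
      Tendsto (fun n : ℕ => (H1 α₁ (x ^ ((n₂ n : ℝ) ^ (1 / α₂)))) ^ n) atTop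
        (𝓝 (Real.exp (-(b * Real.log x) ^ (-α₁))))) ∧
    (∀ x : ℝ, 1 < x →
      Tendsto (fun n : ℕ =>
          (H1 α₁ (x ^ ((n₂ n : ℝ) ^ (1 / α₂)))) ^ n *
            (H1 α₂ (x ^ ((n₂ n : ℝ) ^ (1 / α₂)))) ^ (n₂ n)) atTop
        (𝓝 (Real.exp (-(b * Real.log x) ^ (-α₁) - (Real.log x) ^ (-α₂))))) := by
  have h1 : 0 < α₁ := h2.trans h12
  set t : ℕ → ℝ := fun n => b ^ α₂ * (n : ℝ) ^ (α₂ / α₁) with ht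
  have ht_pos : ∀ n : ℕ, 1 ≤ n → 0 < t n := by
    intro n hn
    have hn' : (0:ℝ) < (n:ℝ) := by exact_mod_cast hn
    have hb2 := rpow_pos_of_pos hb α₂
    have hn2 := rpow_pos_of_pos hn' (α₂ / α₁)
    positivity
  have ht_top : Tendsto t atTop atTop := by
    have h0 : Tendsto (fun n : ℕ => (n : ℝ) ^ (α₂ / α₁)) atTop atTop :=
      (tendsto_rpow_atTop (div_pos h2 h1)).comp tendsto_natCast_atTop_atTop
    exact h0.const_mul_atTop (rpow_pos_of_pos hb α₂)
  have hn₂pos : ∀ n : ℕ, 1 ≤ n → 1 ≤ n₂ n := by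
    intro n hn
    rw [hn₂ n]
    exact Nat.one_le_iff_ne_zero.mpr (Nat.ceil_pos.mpr (ht_pos n hn)).ne'
  -- the ratio `n₂ n / t n` tends to 1
  have hr : Tendsto (fun n : ℕ => (n₂ n : ℝ) / t n) atTop (𝓝 1) := by
    have hupper : Tendsto (fun n : ℕ => 1 + 1 / t n) atTop (𝓝 1) := by
      have h0 : Tendsto (fun n : ℕ => (t n)⁻¹) atTop (𝓝 0) :=
        tendsto_inv_atTop_zero.comp ht_top
      have := (tendsto_const_nhds : Tendsto (fun _ : ℕ => (1:ℝ)) atTop (𝓝 1)).add h0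
      simpa [one_div] using this
    refine tendsto_of_tendsto_of_tendsto_of_le_of_le' tendsto_const_nhds hupper ?_ ?_
    · filter_upwards [ht_top.eventually_gt_atTop 0] with n hp
      rw [le_div_iff₀ hp, one_mul, hn₂ n]
      exact Nat.le_ceil _
    · filter_upwards [ht_top.eventually_gt_atTop 0] with n hp
      rw [div_le_iff₀ hp, add_mul, one_mul, one_div, inv_mul_cancel₀ hp.ne', hn₂ n]
      exact (Nat.ceil_lt_add_one hp.le).le
  -- Part 1
  have hβ : Tendsto (fun n : ℕ => ((n₂ n : ℝ) ^ (1 / α₂)) / ((n : ℝ) ^ (1 / α₁)))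
      atTop (𝓝 b) := by
    have hlim : Tendsto (fun n : ℕ => ((n₂ n : ℝ) / t n) ^ (1 / α₂) * b) atTop (𝓝 b) := by
      have h1' := hr.rpow_const (p := 1 / α₂) (Or.inr (by positivity))
      rw [Real.one_rpow] at h1'
      have := h1'.mul_const b
      rwa [one_mul] at this
    refine hlim.congr' ?_
    filter_upwards [eventually_ge_atTop 1] with n hn
    have hnp : (0:ℝ) < (n:ℝ) := by exact_mod_cast hn
    have hnr : (0:ℝ) < (n:ℝ) ^ (1 / α₁) := rpow_pos_of_pos hnp _
    have htn : 0 < t n := ht_pos n hn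
    have hexps : α₂ / α₁ * (1 / α₂) = 1 / α₁ := by
      field_simp
    have key : (t n) ^ (1 / α₂) = b * (n:ℝ) ^ (1 / α₁) := by
      rw [ht]
      rw [mul_rpow (by positivity) (by positivity), ← rpow_mul hb.le, ← rpow_mul hnp.le,
        mul_one_div, div_self h2.ne', rpow_one, hexps]
    rw [div_rpow (by positivity) htn.le, key]
    field_simp
  -- Part 2
  have hpart2 : ∀ x : ℝ, 1 < x →
      Tendsto (fun n : ℕ => (H1 α₁ (x ^ ((n₂ n : ℝ) ^ (1 / α₂)))) ^ n) atTop
        (𝓝 (Real.exp (-(b * Real.log x) ^ (-α₁)))) := by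
    intro x hx
    have hL : 0 < Real.log x := Real.log_pos hx
    have hx0 : (0:ℝ) < x := lt_trans one_pos hx
    have hlim : Tendsto (fun n : ℕ =>
        Real.exp (-((((n₂ n : ℝ) ^ (1 / α₂)) / ((n : ℝ) ^ (1 / α₁)) * Real.log x) ^ (-α₁))))
        atTop (𝓝 (Real.exp (-(b * Real.log x) ^ (-α₁)))) :=
      (Real.continuous_exp.tendsto _).comp
        (((hβ.mul_const (Real.log x)).rpow_const
          (Or.inl (mul_pos hb hL).ne')).neg)
    refine hlim.congr' ?_
    filter_upwards [eventually_ge_atTop 1] with n hn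
    have hnp : (0:ℝ) < (n:ℝ) := by exact_mod_cast hn
    have hn₂p : (0:ℝ) < (n₂ n : ℝ) := by exact_mod_cast hn₂pos n hn
    set s : ℝ := (n₂ n : ℝ) ^ (1 / α₂) with hs
    have hsp : 0 < s := rpow_pos_of_pos hn₂p _
    have hx1 : 1 < x ^ s := (one_lt_rpow_iff_of_pos hx0).mpr (Or.inl ⟨hx, hsp⟩)
    have hH : H1 α₁ (x ^ s) = Real.exp (-(s * Real.log x) ^ (-α₁)) := by
      rw [H1, if_neg (not_le.mpr hx1), Real.log_rpow hx0]
    have hnr : (0:ℝ) < (n:ℝ) ^ (1 / α₁) := rpow_pos_of_pos hnp _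
    have harg : (s / (n:ℝ) ^ (1 / α₁) * Real.log x) ^ (-α₁)
        = (n:ℝ) * (s * Real.log x) ^ (-α₁) := by
      rw [div_mul_eq_mul_div, div_rpow (by positivity) hnr.le, ← rpow_mul hnp.le,
        mul_neg, one_div, inv_mul_cancel₀ h1.ne', rpow_neg hnp.le, rpow_one,
        div_eq_mul_inv, inv_inv, mul_comm]
    rw [hH, ← Real.exp_nat_mul]
    congr 1
    rw [harg]
    ring
  refine ⟨hβ, hpart2, ?_⟩
  -- Part 3
  intro x hx
  have hL : 0 < Real.log x := Real.log_pos hx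
  have hx0 : (0:ℝ) < x := lt_trans one_pos hx
  have hlim := (hpart2 x hx).mul
    (tendsto_const_nhds : Tendsto (fun _ : ℕ => Real.exp (-(Real.log x) ^ (-α₂))) atTop _)
  rw [← Real.exp_add] at hlim
  have heq : -(b * Real.log x) ^ (-α₁) + -(Real.log x) ^ (-α₂)
      = -(b * Real.log x) ^ (-α₁) - (Real.log x) ^ (-α₂) := by ring
  rw [heq] at hlim
  refine hlim.congr' ?_
  filter_upwards [eventually_ge_atTop 1] with n hn
  have hn₂p : (0:ℝ) < (n₂ n : ℝ) := by exact_mod_cast hn₂pos n hn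
  set s : ℝ := (n₂ n : ℝ) ^ (1 / α₂) with hs
  have hsp : 0 < s := rpow_pos_of_pos hn₂p _
  have hx1 : 1 < x ^ s := (one_lt_rpow_iff_of_pos hx0).mpr (Or.inl ⟨hx, hsp⟩)
  have hH : H1 α₂ (x ^ s) = Real.exp (-(s * Real.log x) ^ (-α₂)) := by
    rw [H1, if_neg (not_le.mpr hx1), Real.log_rpow hx0]
  have harg : (n₂ n : ℝ) * (s * Real.log x) ^ (-α₂) = (Real.log x) ^ (-α₂) := by
    rw [mul_rpow hsp.le hL.le, hs, ← rpow_mul hn₂p.le, mul_neg, one_div,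
      inv_mul_cancel₀ h2.ne', rpow_neg hn₂p.le, rpow_one, ← mul_assoc,
      mul_inv_cancel₀ hn₂p.ne', one_mul]
  congr 1
  rw [hH, ← Real.exp_nat_mul]
  congr 1
  rw [show (↑(n₂ n) : ℝ) * -(s * Real.log x) ^ (-α₂)
      = -((n₂ n : ℝ) * (s * Real.log x) ^ (-α₂)) by ring, harg]
end

section
/- (Left-truncated limit for Pareto & log-Fréchet.) Let F₁(x) = 1 - x^{-α₁} for x > 1 (α₁ > 0) and F₂ = H_{1,α₂} (α₂ > 0), with sample sizes linked by n₂ = ⌈(log n₁ / α₁)^{α₂}⌉. Then with x_n = (1/n₁)·x^{α₁ n₂^{1/α₂}} one has, as n₁ → ∞: x_n → ∞ for every x > e and x_n → 0 for every 1 < x < e; consequently the distribution function of the normalized first maximum tends to 1 for x > e and to 0 for 1 < x < e, so the power-normalized maximum of maxima converges pointwise to the left-truncated distribution H_{1,α₂}(x)·1{x > e} at every x ≠ e. -/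
open Real Filter Topology

/-- The Pareto distribution function with parameter `α`. -/
noncomputable def pareto (α y : ℝ) : ℝ :=
  if y < 1 then 0 else 1 - y ^ (-α)

lemma aux_n2_pos (α₁ α₂ : ℝ) (h1 : 0 < α₁) (h2 : 0 < α₂)
    (n₂ : ℕ → ℕ) (hn₂ : ∀ n : ℕ, n₂ n = ⌈(Real.log n / α₁) ^ α₂⌉₊) :
    ∀ᶠ n : ℕ in atTop, 1 ≤ n₂ n := by
  filter_upwards [eventually_ge_atTop 2] with n hn
  rw [hn₂ n, Nat.one_le_ceil_iff]
  apply Real.rpow_pos_of_pos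
  apply div_pos _ h1
  apply Real.log_pos
  exact_mod_cast hn

lemma aux_c_low (α₁ α₂ : ℝ) (h1 : 0 < α₁) (h2 : 0 < α₂)
    (n₂ : ℕ → ℕ) (hn₂ : ∀ n : ℕ, n₂ n = ⌈(Real.log n / α₁) ^ α₂⌉₊) :
    ∀ᶠ n : ℕ in atTop, Real.log n / α₁ ≤ ((n₂ n : ℝ)) ^ (1 / α₂) := by
  filter_upwards [eventually_ge_atTop 1] with n hn
  have ht : 0 ≤ Real.log n / α₁ := by
    apply div_nonneg _ h1.le
    apply Real.log_nonneg
    exact_mod_cast hn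
  have h := Nat.le_ceil ((Real.log n / α₁) ^ α₂)
  rw [← hn₂ n] at h
  calc Real.log n / α₁ = (((Real.log n / α₁) ^ α₂) ^ (1 / α₂) : ℝ) := by
        rw [one_div, Real.rpow_rpow_inv ht h2.ne']
    _ ≤ ((n₂ n : ℝ)) ^ (1 / α₂) := by
        apply Real.rpow_le_rpow (Real.rpow_nonneg ht _) h (by positivity)

lemma aux_c_upp (α₁ α₂ : ℝ) (h1 : 0 < α₁) (h2 : 0 < α₂)
    (n₂ : ℕ → ℕ) (hn₂ : ∀ n : ℕ, n₂ n = ⌈(Real.log n / α₁) ^ α₂⌉₊)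
    {ε : ℝ} (hε : 0 < ε) :
    ∀ᶠ n : ℕ in atTop, ((n₂ n : ℝ)) ^ (1 / α₂) ≤ (1 + ε) * (Real.log n / α₁) := by
  have hK : 0 < (1 + ε) ^ α₂ - 1 := by
    have : (1:ℝ) < (1 + ε) ^ α₂ :=
      (Real.one_lt_rpow_iff_of_pos (by linarith)).mpr (Or.inl ⟨by linarith, h2⟩)
    linarith
  have htend : Tendsto (fun n : ℕ => (Real.log n / α₁) ^ α₂ * ((1 + ε) ^ α₂ - 1)) atTop atTop := by
    apply Tendsto.atTop_mul_const hK
    apply (tendsto_rpow_atTop h2).comp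
    apply Tendsto.atTop_div_const h1
    exact Real.tendsto_log_atTop.comp tendsto_natCast_atTop_atTop
  filter_upwards [eventually_ge_atTop 1, htend.eventually_ge_atTop 1] with n hn hge
  have ht : 0 ≤ Real.log n / α₁ := by
    apply div_nonneg _ h1.le
    apply Real.log_nonneg
    exact_mod_cast hn
  have hceil : (n₂ n : ℝ) ≤ ((1 + ε) * (Real.log n / α₁)) ^ α₂ := by
    rw [hn₂ n]
    have h' := Nat.ceil_lt_add_one (Real.rpow_nonneg ht α₂)
    rw [Real.mul_rpow (by linarith) ht]
    nlinarith [h']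
  calc ((n₂ n : ℝ)) ^ (1 / α₂) ≤ (((1 + ε) * (Real.log n / α₁)) ^ α₂) ^ (1 / α₂) :=
        Real.rpow_le_rpow (Nat.cast_nonneg _) hceil (by positivity)
    _ = (1 + ε) * (Real.log n / α₁) := by
        rw [one_div, Real.rpow_rpow_inv (by positivity) h2.ne']

lemma aux_e_top (α₁ α₂ : ℝ) (h1 : 0 < α₁) (h2 : 0 < α₂)
    (n₂ : ℕ → ℕ) (hn₂ : ∀ n : ℕ, n₂ n = ⌈(Real.log n / α₁) ^ α₂⌉₊)
    {x : ℝ} (hx : 1 < Real.log x) :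
    Tendsto (fun n : ℕ => α₁ * ((n₂ n : ℝ)) ^ (1 / α₂) * Real.log x - Real.log n) atTop atTop := by
  have hbig : Tendsto (fun n : ℕ => (Real.log x - 1) * Real.log n) atTop atTop :=
    Tendsto.const_mul_atTop (by linarith) (Real.tendsto_log_atTop.comp tendsto_natCast_atTop_atTop)
  apply tendsto_atTop_mono' _ _ hbig
  filter_upwards [aux_c_low α₁ α₂ h1 h2 n₂ hn₂, eventually_ge_atTop 1] with n hc hn
  have hlogn : 0 ≤ Real.log n := Real.log_nonneg (by exact_mod_cast hn)
  have h' : Real.log n ≤ α₁ * ((n₂ n : ℝ)) ^ (1 / α₂) := by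
    rwa [← div_le_iff₀' h1]
  nlinarith

lemma aux_e_bot (α₁ α₂ : ℝ) (h1 : 0 < α₁) (h2 : 0 < α₂)
    (n₂ : ℕ → ℕ) (hn₂ : ∀ n : ℕ, n₂ n = ⌈(Real.log n / α₁) ^ α₂⌉₊)
    {x : ℝ} (hx0 : 0 < Real.log x) (hx : Real.log x < 1) :
    Tendsto (fun n : ℕ => α₁ * ((n₂ n : ℝ)) ^ (1 / α₂) * Real.log x - Real.log n) atTop atBot := by
  obtain ⟨ε, hεpos, hq⟩ : ∃ ε : ℝ, 0 < ε ∧ (1 + ε) * Real.log x < 1 := by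
    refine ⟨(1 - Real.log x) / (2 * Real.log x), div_pos (by linarith) (by linarith), ?_⟩
    have heq : (1 + (1 - Real.log x) / (2 * Real.log x)) * Real.log x
        = (1 + Real.log x) / 2 := by
      field_simp
      ring
    rw [heq]
    linarith
  have hsmall : Tendsto (fun n : ℕ => ((1 + ε) * Real.log x - 1) * Real.log n) atTop atBot := by
    rw [show (fun n : ℕ => ((1 + ε) * Real.log x - 1) * Real.log n)
        = (fun n : ℕ => -((1 - (1 + ε) * Real.log x) * Real.log n)) by funext n; ring]
    rw [tendsto_neg_atBot_iff]
    exact Tendsto.const_mul_atTop (by linarith)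
      (Real.tendsto_log_atTop.comp tendsto_natCast_atTop_atTop)
  apply tendsto_atBot_mono' _ _ hsmall
  filter_upwards [aux_c_upp α₁ α₂ h1 h2 n₂ hn₂ hεpos, eventually_ge_atTop 1] with n hc hn
  have hlogn : 0 ≤ Real.log n := Real.log_nonneg (by exact_mod_cast hn)
  have h' : α₁ * ((n₂ n : ℝ)) ^ (1 / α₂) ≤ (1 + ε) * Real.log n := by
    calc α₁ * ((n₂ n : ℝ)) ^ (1 / α₂) ≤ α₁ * ((1 + ε) * (Real.log n / α₁)) :=
          mul_le_mul_of_nonneg_left hc h1.le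
      _ = (1 + ε) * Real.log n := by
          rw [mul_comm α₁, mul_assoc, div_mul_cancel₀ _ h1.ne']
  nlinarith

lemma log_one_sub_bounds {a : ℝ} (h0 : 0 ≤ a) (h : a ≤ 1/2) :
    -(2*a) ≤ Real.log (1 - a) ∧ Real.log (1 - a) ≤ -a := by
  have h1 : (0:ℝ) < 1 - a := by linarith
  constructor
  · have h2 : Real.log (1-a)⁻¹ ≤ (1-a)⁻¹ - 1 := Real.log_le_sub_one_of_pos (by positivity)
    have h3 : (1-a)⁻¹ - 1 = a / (1-a) := by field_simp; ring
    have h4 : a / (1-a) ≤ 2*a := by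
      rw [div_le_iff₀ h1]; nlinarith
    rw [Real.log_inv] at h2
    linarith
  · have := Real.log_le_sub_one_of_pos h1
    linarith

/-- rewriting the pareto factor. -/
lemma aux_pareto_eq (α₁ α₂ : ℝ) (h1 : 0 < α₁) {x : ℝ} (hx1 : 1 < x) (n₂ : ℕ → ℕ) (n : ℕ) :
    pareto α₁ (x ^ ((n₂ n : ℝ) ^ (1 / α₂))) = 1 - x ^ (-(α₁ * ((n₂ n : ℝ)) ^ (1 / α₂))) := by
  have hc0 : 0 ≤ ((n₂ n : ℝ)) ^ (1 / α₂) := Real.rpow_nonneg (Nat.cast_nonneg _) _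
  rw [pareto, if_neg (not_lt.mpr (Real.one_le_rpow hx1.le hc0))]
  congr 1
  rw [← Real.rpow_mul (by linarith : (0:ℝ) ≤ x)]
  congr 1
  ring

/-- n * a n = exp(-(E n)) for n ≥ 1. -/
lemma aux_na (α₁ α₂ : ℝ) {x : ℝ} (hx0 : 0 < x) (n₂ : ℕ → ℕ) {n : ℕ} (hn : 1 ≤ n) :
    (n : ℝ) * x ^ (-(α₁ * ((n₂ n : ℝ)) ^ (1 / α₂)))
      = Real.exp (-(α₁ * ((n₂ n : ℝ)) ^ (1 / α₂) * Real.log x - Real.log n)) := by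
  have hn0 : (0:ℝ) < n := by exact_mod_cast hn
  calc (n : ℝ) * x ^ (-(α₁ * ((n₂ n : ℝ)) ^ (1 / α₂)))
      = Real.exp (Real.log n) * Real.exp (Real.log x * (-(α₁ * ((n₂ n : ℝ)) ^ (1 / α₂)))) := by
        rw [Real.exp_log hn0, Real.rpow_def_of_pos hx0]
    _ = Real.exp (-(α₁ * ((n₂ n : ℝ)) ^ (1 / α₂) * Real.log x - Real.log n)) := by
        rw [← Real.exp_add]; congr 1; ring

lemma aux_part3 (α₁ α₂ : ℝ) (h1 : 0 < α₁) (h2 : 0 < α₂)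
    (n₂ : ℕ → ℕ) (hn₂ : ∀ n : ℕ, n₂ n = ⌈(Real.log n / α₁) ^ α₂⌉₊)
    {x : ℝ} (hx : Real.exp 1 < x) :
    Tendsto (fun n : ℕ => (pareto α₁ (x ^ ((n₂ n : ℝ) ^ (1 / α₂)))) ^ n) atTop (𝓝 1) := by
  have hx0 : (0:ℝ) < x := lt_trans (Real.exp_pos 1) hx
  have hx1 : (1:ℝ) < x := by
    have := Real.add_one_le_exp 1
    linarith
  have hlog : 1 < Real.log x := (Real.lt_log_iff_exp_lt hx0).mpr hx
  set a : ℕ → ℝ := fun n => x ^ (-(α₁ * ((n₂ n : ℝ)) ^ (1 / α₂))) with ha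
  have ha0 : ∀ n, 0 ≤ a n := fun n => Real.rpow_nonneg hx0.le _
  have hE := aux_e_top α₁ α₂ h1 h2 n₂ hn₂ hlog
  have hna : Tendsto (fun n : ℕ => (n:ℝ) * a n) atTop (𝓝 0) := by
    have h0 : Tendsto (fun n : ℕ =>
        Real.exp (-(α₁ * ((n₂ n : ℝ)) ^ (1 / α₂) * Real.log x - Real.log n))) atTop (𝓝 0) :=
      Real.tendsto_exp_atBot.comp (tendsto_neg_atTop_atBot.comp hE)
    apply h0.congr'
    filter_upwards [eventually_ge_atTop 1] with n hn
    exact (aux_na α₁ α₂ hx0 n₂ hn).symm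
  have hhalf : ∀ᶠ n : ℕ in atTop, a n ≤ 1/2 := by
    filter_upwards [hna.eventually_lt_const (show (0:ℝ) < 1/2 by norm_num),
      eventually_ge_atTop 1] with n h hn
    have : a n ≤ (n:ℝ) * a n :=
      le_mul_of_one_le_left (ha0 n) (by exact_mod_cast hn)
    linarith
  have hkey : Tendsto (fun n : ℕ => (n:ℝ) * Real.log (1 - a n)) atTop (𝓝 0) := by
    apply tendsto_of_tendsto_of_tendsto_of_le_of_le'
      (g := fun n : ℕ => -(2 * ((n:ℝ) * a n))) (h := fun n : ℕ => -((n:ℝ) * a n))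
    · simpa using (hna.const_mul 2).neg
    · simpa using hna.neg
    · filter_upwards [hhalf] with n hn
      have hb := (log_one_sub_bounds (ha0 n) hn).1
      calc -(2 * ((n:ℝ) * a n)) = (n:ℝ) * (-(2 * a n)) := by ring
        _ ≤ (n:ℝ) * Real.log (1 - a n) :=
            mul_le_mul_of_nonneg_left hb (Nat.cast_nonneg n)
    · filter_upwards [hhalf] with n hn
      have hb := (log_one_sub_bounds (ha0 n) hn).2
      calc (n:ℝ) * Real.log (1 - a n) ≤ (n:ℝ) * (-(a n)) :=
            mul_le_mul_of_nonneg_left hb (Nat.cast_nonneg n)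
        _ = -((n:ℝ) * a n) := by ring
  have hfinal : Tendsto (fun n : ℕ => Real.exp ((n:ℝ) * Real.log (1 - a n))) atTop (𝓝 1) := by
    have := (Real.continuous_exp.tendsto 0).comp hkey
    simpa [Function.comp_def] using this
  apply hfinal.congr'
  filter_upwards [hhalf] with n hn
  have hpos : 0 < 1 - a n := by linarith
  rw [Real.exp_nat_mul, Real.exp_log hpos, aux_pareto_eq α₁ α₂ h1 hx1 n₂ n]

lemma aux_part4 (α₁ α₂ : ℝ) (h1 : 0 < α₁) (h2 : 0 < α₂)
    (n₂ : ℕ → ℕ) (hn₂ : ∀ n : ℕ, n₂ n = ⌈(Real.log n / α₁) ^ α₂⌉₊)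
    {x : ℝ} (hx1 : 1 < x) (hxe : x < Real.exp 1) :
    Tendsto (fun n : ℕ => (pareto α₁ (x ^ ((n₂ n : ℝ) ^ (1 / α₂)))) ^ n) atTop (𝓝 0) := by
  have hx0 : (0:ℝ) < x := by linarith
  have hlog0 : 0 < Real.log x := Real.log_pos hx1
  have hlog1 : Real.log x < 1 := by
    have := Real.log_lt_log hx0 hxe
    rwa [Real.log_exp] at this
  set a : ℕ → ℝ := fun n => x ^ (-(α₁ * ((n₂ n : ℝ)) ^ (1 / α₂))) with ha
  have ha0 : ∀ n, 0 ≤ a n := fun n => Real.rpow_nonneg hx0.le _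
  have ha1 : ∀ n, a n ≤ 1 := fun n =>
    Real.rpow_le_one_of_one_le_of_nonpos hx1.le
      (neg_nonpos.mpr (mul_nonneg h1.le (Real.rpow_nonneg (Nat.cast_nonneg _) _)))
  have hE := aux_e_bot α₁ α₂ h1 h2 n₂ hn₂ hlog0 hlog1
  have hna : Tendsto (fun n : ℕ => (n:ℝ) * a n) atTop atTop := by
    have h0 : Tendsto (fun n : ℕ =>
        Real.exp (-(α₁ * ((n₂ n : ℝ)) ^ (1 / α₂) * Real.log x - Real.log n))) atTop atTop :=
      Real.tendsto_exp_atTop.comp (tendsto_neg_atBot_atTop.comp hE)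
    apply h0.congr'
    filter_upwards [eventually_ge_atTop 1] with n hn
    exact (aux_na α₁ α₂ hx0 n₂ hn).symm
  have hg : Tendsto (fun n : ℕ => Real.exp ((n:ℝ) * (-(a n)))) atTop (𝓝 0) := by
    have h0 : Tendsto (fun n : ℕ => Real.exp (-((n:ℝ) * a n))) atTop (𝓝 0) :=
      Real.tendsto_exp_atBot.comp (tendsto_neg_atTop_atBot.comp hna)
    apply h0.congr
    intro n
    congr 1
    ring
  apply squeeze_zero' _ _ hg
  · filter_upwards with n
    exact pow_nonneg (by rw [aux_pareto_eq α₁ α₂ h1 hx1 n₂ n]; linarith [ha1 n]) n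
  · filter_upwards with n
    rw [aux_pareto_eq α₁ α₂ h1 hx1 n₂ n, Real.exp_nat_mul]
    apply pow_le_pow_left₀ (by linarith [ha1 n])
    have := Real.add_one_le_exp (-(a n))
    linarith

lemma aux_H1_const (α₁ α₂ : ℝ) (h1 : 0 < α₁) (h2 : 0 < α₂)
    (n₂ : ℕ → ℕ) (hn₂ : ∀ n : ℕ, n₂ n = ⌈(Real.log n / α₁) ^ α₂⌉₊)
    {x : ℝ} (hx1 : 1 < x) :
    ∀ᶠ n : ℕ in atTop, (H1 α₂ (x ^ ((n₂ n : ℝ) ^ (1 / α₂)))) ^ (n₂ n) = H1 α₂ x := by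
  have hx0 : (0:ℝ) < x := by linarith
  filter_upwards [aux_n2_pos α₁ α₂ h1 h2 n₂ hn₂] with n hm
  have hm0 : (0:ℝ) < (n₂ n : ℝ) := by exact_mod_cast hm
  have hc_pos : 0 < ((n₂ n : ℝ)) ^ (1 / α₂) := Real.rpow_pos_of_pos hm0 _
  have harg : 1 < x ^ ((n₂ n : ℝ)) ^ (1 / α₂) :=
    (Real.one_lt_rpow_iff_of_pos hx0).mpr (Or.inl ⟨hx1, hc_pos⟩)
  rw [H1, if_neg (not_le.mpr harg), H1, if_neg (not_le.mpr hx1)]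
  rw [Real.log_rpow hx0, Real.mul_rpow hc_pos.le (Real.log_nonneg hx1.le)]
  have hcpow : (((n₂ n : ℝ)) ^ (1 / α₂)) ^ (-α₂) = ((n₂ n : ℝ))⁻¹ := by
    rw [← Real.rpow_mul (Nat.cast_nonneg _)]
    rw [show (1 / α₂) * (-α₂) = -1 by field_simp]
    exact Real.rpow_neg_one _
  rw [hcpow, ← Real.exp_nat_mul]
  congr 1
  rw [mul_neg, ← mul_assoc, mul_inv_cancel₀ hm0.ne', one_mul]

/-- Left-truncated limit for Pareto & log-Fréchet with `n₂ = ⌈(log n₁/α₁)^{α₂}⌉`: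
with `x_n = (1/n₁) x^{α₁ n₂^{1/α₂}}`, one has `x_n → ∞` for `x > e`, `x_n → 0` for
`1 < x < e`; the normalized first maximum converges to `1` for `x > e` and to `0` for
`1 < x < e`; and the power-normalized maximum of maxima converges pointwise to the
left-truncated distribution `H_{1,α₂}(x)·1{x > e}` at every `x ≠ e`. -/
theorem stmt_9 (α₁ α₂ : ℝ) (h1 : 0 < α₁) (h2 : 0 < α₂)
    (n₂ : ℕ → ℕ) (hn₂ : ∀ n : ℕ, n₂ n = ⌈(Real.log n / α₁) ^ α₂⌉₊) :
    (∀ x : ℝ, Real.exp 1 < x →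
      Tendsto (fun n : ℕ => (1 / (n : ℝ)) * x ^ (α₁ * (n₂ n : ℝ) ^ (1 / α₂)))
        atTop atTop) ∧
    (∀ x : ℝ, 1 < x → x < Real.exp 1 →
      Tendsto (fun n : ℕ => (1 / (n : ℝ)) * x ^ (α₁ * (n₂ n : ℝ) ^ (1 / α₂)))
        atTop (𝓝 0)) ∧
    (∀ x : ℝ, Real.exp 1 < x →
      Tendsto (fun n : ℕ => (pareto α₁ (x ^ ((n₂ n : ℝ) ^ (1 / α₂)))) ^ n)
        atTop (𝓝 1)) ∧
    (∀ x : ℝ, 1 < x → x < Real.exp 1 →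
      Tendsto (fun n : ℕ => (pareto α₁ (x ^ ((n₂ n : ℝ) ^ (1 / α₂)))) ^ n)
        atTop (𝓝 0)) ∧
    (∀ x : ℝ, x ≠ Real.exp 1 →
      Tendsto (fun n : ℕ =>
          (pareto α₁ (|x| ^ ((n₂ n : ℝ) ^ (1 / α₂)) * Real.sign x)) ^ n *
            (H1 α₂ (|x| ^ ((n₂ n : ℝ) ^ (1 / α₂)) * Real.sign x)) ^ (n₂ n)) atTop
        (𝓝 (if Real.exp 1 < x then H1 α₂ x else 0))) := by
  have hexp1 : (1:ℝ) < Real.exp 1 := by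
    have := Real.add_one_le_exp 1
    linarith
  refine ⟨?_, ?_, fun x hx => aux_part3 α₁ α₂ h1 h2 n₂ hn₂ hx,
    fun x hx1 hxe => aux_part4 α₁ α₂ h1 h2 n₂ hn₂ hx1 hxe, ?_⟩
  · intro x hx
    have hx0 : (0:ℝ) < x := lt_trans (Real.exp_pos 1) hx
    have hlog : 1 < Real.log x := (Real.lt_log_iff_exp_lt hx0).mpr hx
    apply Tendsto.congr' _ (Real.tendsto_exp_atTop.comp (aux_e_top α₁ α₂ h1 h2 n₂ hn₂ hlog))
    filter_upwards [eventually_ge_atTop 1] with n hn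
    have hn0 : (0:ℝ) < n := by exact_mod_cast hn
    show Real.exp (α₁ * ((n₂ n : ℝ)) ^ (1 / α₂) * Real.log x - Real.log n)
      = (1 / (n : ℝ)) * x ^ (α₁ * (n₂ n : ℝ) ^ (1 / α₂))
    rw [Real.rpow_def_of_pos hx0, Real.exp_sub, Real.exp_log hn0]
    rw [mul_comm (Real.log x), one_div, div_eq_inv_mul, one_div]
  · intro x hx1 hxe
    have hx0 : (0:ℝ) < x := by linarith
    have hlog0 : 0 < Real.log x := Real.log_pos hx1
    have hlog1 : Real.log x < 1 := by
      have := Real.log_lt_log hx0 hxe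
      rwa [Real.log_exp] at this
    apply Tendsto.congr' _
      (Real.tendsto_exp_atBot.comp (aux_e_bot α₁ α₂ h1 h2 n₂ hn₂ hlog0 hlog1))
    filter_upwards [eventually_ge_atTop 1] with n hn
    have hn0 : (0:ℝ) < n := by exact_mod_cast hn
    show Real.exp (α₁ * ((n₂ n : ℝ)) ^ (1 / α₂) * Real.log x - Real.log n)
      = (1 / (n : ℝ)) * x ^ (α₁ * (n₂ n : ℝ) ^ (1 / α₂))
    rw [Real.rpow_def_of_pos hx0, Real.exp_sub, Real.exp_log hn0]
    rw [mul_comm (Real.log x), one_div, div_eq_inv_mul, one_div]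
  · intro x hx
    by_cases hgt : Real.exp 1 < x
    · rw [if_pos hgt]
      have hx0 : (0:ℝ) < x := lt_trans (Real.exp_pos 1) hgt
      have hx1 : (1:ℝ) < x := by linarith
      have habs : |x| = x := abs_of_pos hx0
      have hsign : Real.sign x = 1 := Real.sign_of_pos hx0
      simp only [habs, hsign, mul_one]
      have h3 := (aux_part3 α₁ α₂ h1 h2 n₂ hn₂ hgt).mul_const (H1 α₂ x)
      rw [one_mul] at h3
      apply h3.congr'
      filter_upwards [aux_H1_const α₁ α₂ h1 h2 n₂ hn₂ hx1] with n hH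
      rw [hH]
    · rw [if_neg hgt]
      push_neg at hgt
      have hlt : x < Real.exp 1 := lt_of_le_of_ne hgt hx
      by_cases hx1 : 1 < x
      · -- 1 < x < e
        have hx0 : (0:ℝ) < x := by linarith
        have habs : |x| = x := abs_of_pos hx0
        have hsign : Real.sign x = 1 := Real.sign_of_pos hx0
        simp only [habs, hsign, mul_one]
        have h4 := (aux_part4 α₁ α₂ h1 h2 n₂ hn₂ hx1 hlt).mul_const (H1 α₂ x)
        rw [zero_mul] at h4
        apply h4.congr'
        filter_upwards [aux_H1_const α₁ α₂ h1 h2 n₂ hn₂ hx1] with n hH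
        rw [hH]
      · -- x ≤ 1
        push_neg at hx1
        apply Tendsto.congr' _ (tendsto_const_nhds (x := (0:ℝ)))
        filter_upwards [aux_n2_pos α₁ α₂ h1 h2 n₂ hn₂] with n hm
        have harg : |x| ^ ((n₂ n : ℝ) ^ (1 / α₂)) * Real.sign x ≤ 1 := by
          rcases lt_trichotomy x 0 with h | h | h
          · rw [Real.sign_of_neg h]
            have hpos : 0 < |x| ^ ((n₂ n : ℝ) ^ (1 / α₂)) :=
              Real.rpow_pos_of_pos (abs_pos.mpr h.ne) _
            nlinarith
          · subst h
            rw [Real.sign_zero, mul_zero]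
            norm_num
          · rw [Real.sign_of_pos h, mul_one, abs_of_pos h]
            exact Real.rpow_le_one h.le hx1 (Real.rpow_nonneg (Nat.cast_nonneg _) _)
        have hz : H1 α₂ (|x| ^ ((n₂ n : ℝ) ^ (1 / α₂)) * Real.sign x) = 0 := by
          rw [H1, if_pos harg]
        rw [hz, zero_pow (by omega : n₂ n ≠ 0), mul_zero]
end

section
/- (Khintchine-type convergence of power types — uniqueness direction.) Let F_n be a sequence of distribution functions, T₁ a distribution function continuous at the relevant points, and α_n, β_n, α'_n, β'_n positive sequences with (α_n^{β'_n}/(α'_n)^{β_n})^{1/β'_n} → A > 0 and β_n/β'_n → B > 0. If F_n(|x/α_n|^{1/β_n} sign(x)) → T₁(x) weakly, then F_n(|x/α'_n|^{1/β'_n} sign(x)) → T₂(x) weakly where T₂(x) = T₁(A|x|^B sign(x)). -/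
open Real Filter Topology

lemma psi_mono {C p : ℝ} (hC : 0 < C) (hp : 0 < p) :
    StrictMono (fun z : ℝ => C * |z| ^ p * Real.sign z) := by
  have hval : ∀ z : ℝ, 0 ≤ z → C * |z| ^ p * Real.sign z = C * z ^ p := by
    intro z hz
    rcases hz.eq_or_lt with h | h
    · simp [← h, Real.sign_zero, Real.zero_rpow hp.ne']
    · rw [abs_of_pos h, Real.sign_of_pos h, mul_one]
  have hvalneg : ∀ z : ℝ, z < 0 → C * |z| ^ p * Real.sign z = -(C * (-z) ^ p) := by
    intro z hz
    rw [abs_of_neg hz, Real.sign_of_neg hz]; ring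
  intro u v huv
  show C * |u| ^ p * Real.sign u < C * |v| ^ p * Real.sign v
  rcases le_or_gt 0 u with hu | hu
  · have hv : 0 < v := lt_of_le_of_lt hu huv
    rw [hval u hu, hval v hv.le]
    exact mul_lt_mul_of_pos_left (Real.rpow_lt_rpow hu huv hp) hC
  · rcases le_or_gt 0 v with hv | hv
    · have h1 : C * |u| ^ p * Real.sign u < 0 := by
        rw [hvalneg u hu]
        have : 0 < C * (-u) ^ p := mul_pos hC (Real.rpow_pos_of_pos (by linarith) p)
        linarith
      have h2 : 0 ≤ C * |v| ^ p * Real.sign v := by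
        rw [hval v hv]
        positivity
      exact lt_of_lt_of_le h1 h2
    · rw [hvalneg u hu, hvalneg v hv, neg_lt_neg_iff]
      exact mul_lt_mul_of_pos_left (Real.rpow_lt_rpow (by linarith) (by linarith) hp) hC

lemma psi_surj {C p : ℝ} (hC : 0 < C) (hp : 0 < p) :
    Function.Surjective (fun z : ℝ => C * |z| ^ p * Real.sign z) := by
  intro z
  refine ⟨(|z| / C) ^ p⁻¹ * Real.sign z, ?_⟩
  rcases lt_trichotomy z 0 with hz | hz | hz
  · have hpos : 0 < (|z| / C) ^ p⁻¹ := Real.rpow_pos_of_pos (div_pos (abs_pos.2 hz.ne) hC) _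
    have hw : (|z| / C) ^ p⁻¹ * Real.sign z = -((|z| / C) ^ p⁻¹) := by
      rw [Real.sign_of_neg hz]; ring
    simp only [hw, abs_neg, abs_of_pos hpos]
    rw [Real.sign_of_neg (by linarith), Real.rpow_inv_rpow (by positivity) hp.ne']
    rw [abs_of_neg hz]
    field_simp
  · simp [hz, Real.sign_zero]
  · have hpos : 0 < (|z| / C) ^ p⁻¹ := Real.rpow_pos_of_pos (div_pos (abs_pos.2 hz.ne') hC) _
    have hw : (|z| / C) ^ p⁻¹ * Real.sign z = (|z| / C) ^ p⁻¹ := by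
      rw [Real.sign_of_pos hz, mul_one]
    simp only [hw, abs_of_pos hpos]
    rw [Real.sign_of_pos hpos, Real.rpow_inv_rpow (by positivity) hp.ne', mul_one,
      abs_of_pos hz]
    field_simp

lemma squeeze_lemma {T : ℝ → ℝ} (hT : Monotone T)
    {G : ℕ → ℝ → ℝ} (hG : ∀ n, Monotone (G n))
    (hGT : ∀ u, ContinuousAt T u → Tendsto (fun n => G n u) atTop (𝓝 (T u)))
    {y : ℝ} (hy : ContinuousAt T y) {s : ℕ → ℝ} (hs : Tendsto s atTop (𝓝 y)) :
    Tendsto (fun n => G n (s n)) atTop (𝓝 (T y)) := by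
  have hdense : Dense {u : ℝ | ContinuousAt T u} := by
    have h1 : Dense {u : ℝ | ¬ContinuousAt T u}ᶜ :=
      Set.Countable.dense_compl ℝ hT.countable_not_continuousAt
    simp only [Set.compl_setOf, not_not] at h1
    exact h1
  rw [tendsto_order]
  constructor
  · intro c hc
    -- find a continuity point u < y with c < T u
    have hnhds : {z | c < T z} ∈ 𝓝 y := hy (Ioi_mem_nhds hc)
    rcases Metric.mem_nhds_iff.1 hnhds with ⟨δ, hδ, hball⟩
    obtain ⟨u, huD, huU⟩ := hdense.exists_mem_open isOpen_Ioo
      (Set.nonempty_Ioo.2 (by linarith : y - δ < y))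
    have hcu : c < T u := hball (by
      simp only [Metric.mem_ball, Real.dist_eq]
      rw [abs_sub_lt_iff]; constructor <;> [linarith [huU.1, huU.2]; linarith [huU.1, huU.2]])
    have h1 : ∀ᶠ n in atTop, u < s n := hs.eventually (eventually_gt_nhds huU.2)
    have h2 : ∀ᶠ n in atTop, c < G n u := (hGT u huD).eventually (eventually_gt_nhds hcu)
    filter_upwards [h1, h2] with n hn1 hn2
    exact lt_of_lt_of_le hn2 ((hG n) hn1.le)
  · intro c hc
    have hnhds : {z | T z < c} ∈ 𝓝 y := hy (Iio_mem_nhds hc)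
    rcases Metric.mem_nhds_iff.1 hnhds with ⟨δ, hδ, hball⟩
    obtain ⟨u, huD, huU⟩ := hdense.exists_mem_open isOpen_Ioo
      (Set.nonempty_Ioo.2 (by linarith : y < y + δ))
    have hcu : T u < c := hball (by
      simp only [Metric.mem_ball, Real.dist_eq]
      rw [abs_sub_lt_iff]; constructor <;> [linarith [huU.1, huU.2]; linarith [huU.1, huU.2]])
    have h1 : ∀ᶠ n in atTop, s n < u := hs.eventually (eventually_lt_nhds huU.1)
    have h2 : ∀ᶠ n in atTop, G n u < c := (hGT u huD).eventually (eventually_lt_nhds hcu)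
    filter_upwards [h1, h2] with n hn1 hn2
    exact lt_of_le_of_lt ((hG n) hn1.le) hn2

lemma key_identity {x aa bb aa' bb' : ℝ} (ha : 0 < aa) (hb : 0 < bb)
    (ha' : 0 < aa') (hb' : 0 < bb') :
    |((aa ^ bb' / aa' ^ bb) ^ (1 / bb') * |x| ^ (bb / bb') * Real.sign x) / aa| ^ (1 / bb)
      * Real.sign ((aa ^ bb' / aa' ^ bb) ^ (1 / bb') * |x| ^ (bb / bb') * Real.sign x)
    = |x / aa'| ^ (1 / bb') * Real.sign x := by
  rcases eq_or_ne x 0 with hx | hx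
  · simp [hx, Real.sign_zero, Real.zero_rpow (by positivity : (1:ℝ)/bb ≠ 0),
      Real.zero_rpow (by positivity : (1:ℝ)/bb' ≠ 0)]
  · set An : ℝ := (aa ^ bb' / aa' ^ bb) ^ (1 / bb') with hAn
    have hAnpos : 0 < An := Real.rpow_pos_of_pos (by positivity) _
    have ht : 0 < |x| := abs_pos.2 hx
    have hAneq : An = aa / aa' ^ (bb / bb') := by
      rw [hAn, Real.div_rpow (by positivity) (by positivity),
        ← Real.rpow_mul ha.le, ← Real.rpow_mul ha'.le,
        mul_one_div_cancel hb'.ne', Real.rpow_one, mul_one_div]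
    have hcore : (An * |x| ^ (bb / bb') / aa) ^ (1 / bb) = (|x| / aa') ^ (1 / bb') := by
      rw [hAneq]
      have : aa / aa' ^ (bb / bb') * |x| ^ (bb / bb') / aa = (|x| / aa') ^ (bb / bb') := by
        rw [Real.div_rpow (abs_nonneg x) ha'.le]
        field_simp
      rw [this, ← Real.rpow_mul (by positivity)]
      congr 1
      field_simp
    have habs : |x / aa'| = |x| / aa' := by rw [abs_div, abs_of_pos ha']
    rcases hx.lt_or_gt with hneg | hpos
    · have hinner : An * |x| ^ (bb / bb') * Real.sign x = -(An * |x| ^ (bb / bb')) := by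
        rw [Real.sign_of_neg hneg]; ring
      have hip : 0 < An * |x| ^ (bb / bb') := by positivity
      rw [hinner, Real.sign_of_neg (by linarith), Real.sign_of_neg hneg]
      rw [show -(An * |x| ^ (bb / bb')) / aa = -(An * |x| ^ (bb / bb') / aa) by ring,
        abs_neg, abs_of_pos (by positivity), hcore, habs]
    · have hinner : An * |x| ^ (bb / bb') * Real.sign x = An * |x| ^ (bb / bb') := by
        rw [Real.sign_of_pos hpos, mul_one]
      have hip : 0 < An * |x| ^ (bb / bb') := by positivity
      rw [hinner, Real.sign_of_pos hip, Real.sign_of_pos hpos,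
        abs_of_pos (by positivity), hcore, habs]

/-- Khintchine-type convergence of power types (uniqueness direction): if the
distribution functions `F_n`, power-normalized by `(α_n, β_n)`, converge weakly to
`T₁`, and `(α_n^{β'_n}/(α'_n)^{β_n})^{1/β'_n} → A > 0`, `β_n/β'_n → B > 0`, then the
`(α'_n, β'_n)`-normalized sequence converges weakly to
`T₂(x) = T₁(A|x|^B sign x)`. -/
theorem stmt_16 (F : ℕ → ℝ → ℝ) (T₁ : ℝ → ℝ) (a b a' b' : ℕ → ℝ) (A B : ℝ)
    (hF : ∀ n, Monotone (F n)) (hT₁ : Monotone T₁)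
    (ha : ∀ n, 0 < a n) (hb : ∀ n, 0 < b n) (ha' : ∀ n, 0 < a' n) (hb' : ∀ n, 0 < b' n)
    (hA : 0 < A) (hB : 0 < B)
    (hAlim : Tendsto (fun n => ((a n ^ (b' n)) / (a' n ^ (b n))) ^ (1 / b' n))
      atTop (𝓝 A))
    (hBlim : Tendsto (fun n => b n / b' n) atTop (𝓝 B))
    (hconv : ∀ x : ℝ, ContinuousAt T₁ x →
      Tendsto (fun n => F n (|x / a n| ^ (1 / b n) * Real.sign x)) atTop (𝓝 (T₁ x))) :
    ∀ x : ℝ, ContinuousAt (fun y : ℝ => T₁ (A * |y| ^ B * Real.sign y)) x →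
      Tendsto (fun n => F n (|x / a' n| ^ (1 / b' n) * Real.sign x)) atTop
        (𝓝 (T₁ (A * |x| ^ B * Real.sign x))) := by
  intro x hx
  have hmono := psi_mono hA hB
  have hsurj := psi_surj hA hB
  have hTcont : ContinuousAt T₁ (A * |x| ^ B * Real.sign x) := by
    let e : ℝ ≃o ℝ := StrictMono.orderIsoOfSurjective _ hmono hsurj
    exact (e.toHomeomorph.comp_continuousAt_iff' T₁ x).mp hx
  have hst : Tendsto
      (fun n => (a n ^ b' n / a' n ^ b n) ^ (1 / b' n) * |x| ^ (b n / b' n) * Real.sign x)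
      atTop (𝓝 (A * |x| ^ B * Real.sign x)) := by
    rcases eq_or_ne x 0 with hx0 | hx0
    · simp only [hx0, Real.sign_zero, mul_zero]
      exact tendsto_const_nhds
    · exact (hAlim.mul (Filter.Tendsto.rpow tendsto_const_nhds hBlim
        (Or.inl (abs_ne_zero.2 hx0)))).mul tendsto_const_nhds
  have hGmono : ∀ n, Monotone (fun z => F n (|z / a n| ^ (1 / b n) * Real.sign z)) := by
    intro n
    have h1 : StrictMono (fun z : ℝ => ((a n)⁻¹) ^ (1 / b n) * |z| ^ (1 / b n) * Real.sign z) :=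
      psi_mono (Real.rpow_pos_of_pos (inv_pos.2 (ha n)) _) (one_div_pos.2 (hb n))
    have h2 : ∀ z : ℝ, |z / a n| ^ (1 / b n) * Real.sign z
        = ((a n)⁻¹) ^ (1 / b n) * |z| ^ (1 / b n) * Real.sign z := by
      intro z
      rw [abs_div, abs_of_pos (ha n), div_eq_mul_inv,
        Real.mul_rpow (abs_nonneg z) (inv_nonneg.2 (ha n).le)]
      ring
    intro u v huv
    simp only [h2]
    exact hF n (h1.monotone huv)
  have hmain := squeeze_lemma hT₁ hGmono (fun u hu => hconv u hu) hTcont hst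
  refine hmain.congr fun n => ?_
  exact congrArg (F n) (key_identity (ha n) (hb n) (ha' n) (hb' n))
end
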